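/- Let M be a metric space, p ≠ q ∈ M, and define f_{pq}(t) = (d(p,q)/2)·((d(t,q) - d(t,p))/(d(t,q) + d(t,p)) - (d(0,q) - d(0,p))/(d(0,q) + d(0,p))). If u ≠ v ∈ M and ε > 0 satisfy (f_{pq}(u) - f_{pq}(v))/d(u,v) > 1 - ε, then both u and v lie in the ε-approximate metric segment [p,q]_ε = {x ∈ M : d(p,x) + d(x,q) ≤ d(p,q)/(1-ε)}. -/

import Mathlib

noncomputable section

open Metric Set

/-- The space of real-valued Lipschitz functions on `M` vanishing at `base`. -/
structure Lip0 (M : Type*) [MetricSpace M] (base : M) where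
  toFun : M → ℝ
  exists_lip' : ∃ K, LipschitzWith K toFun
  map_base' : toFun base = 0

namespace Lip0

variable {M : Type*} [MetricSpace M] {base : M}

instance : FunLike (Lip0 M base) M ℝ where
  coe := toFun
  coe_injective := by rintro ⟨f, _, _⟩ ⟨g, _, _⟩ h; simpa using h

@[simp] lemma map_base (f : Lip0 M base) : f base = 0 := f.map_base'

/-- The set of (nonnegative real) Lipschitz constants of `f`. -/
def lipSet (f : Lip0 M base) : Set ℝ :=
  {K | 0 ≤ K ∧ ∀ x y, |f x - f y| ≤ K * dist x y}

lemma lipSet_nonempty (f : Lip0 M base) : (lipSet f).Nonempty := by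
  obtain ⟨K, hK⟩ := f.exists_lip'
  exact ⟨K, K.coe_nonneg, fun x y => by
    have h := hK.dist_le_mul x y; rw [Real.dist_eq] at h; exact h⟩

lemma lipSet_bddBelow (f : Lip0 M base) : BddBelow (lipSet f) :=
  ⟨0, fun K hK => hK.1⟩

lemma sInf_mem_lipSet (f : Lip0 M base) : sInf (lipSet f) ∈ lipSet f := by
  constructor
  · exact le_csInf (lipSet_nonempty f) fun K hK => hK.1
  · intro x y
    rcases eq_or_ne x y with rfl | hxy
    · simp
    · have hd : 0 < dist x y := dist_pos.2 hxy
      rw [← div_le_iff₀ hd]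
      exact le_csInf (lipSet_nonempty f) fun K hK => (div_le_iff₀ hd).2 (hK.2 x y)

instance : Zero (Lip0 M base) :=
  ⟨⟨fun _ => 0, ⟨0, LipschitzWith.const 0⟩, rfl⟩⟩

instance : Add (Lip0 M base) :=
  ⟨fun f g => ⟨fun t => f t + g t, by
    obtain ⟨Kf, hf⟩ := f.exists_lip'; obtain ⟨Kg, hg⟩ := g.exists_lip'
    exact ⟨Kf + Kg, hf.add hg⟩, by simp⟩⟩

instance : Neg (Lip0 M base) :=
  ⟨fun f => ⟨fun t => -f t, by
    obtain ⟨Kf, hf⟩ := f.exists_lip'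
    exact ⟨Kf, hf.neg⟩, by simp⟩⟩

def rsmul (c : ℝ) (f : Lip0 M base) : Lip0 M base :=
  ⟨fun t => c * f t, by
    obtain ⟨Kf, hf⟩ := f.exists_lip'
    refine ⟨⟨|c|, abs_nonneg c⟩ * Kf, LipschitzWith.of_dist_le_mul fun x y => ?_⟩
    have h1 : dist (c * f x) (c * f y) = |c| * |f x - f y| := by
      rw [Real.dist_eq, ← abs_mul, mul_sub]
    have h2 := hf.dist_le_mul x y
    rw [Real.dist_eq] at h2
    rw [h1]
    calc |c| * |f x - f y| ≤ |c| * (Kf * dist x y) :=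
          mul_le_mul_of_nonneg_left h2 (abs_nonneg c)
      _ = (⟨|c|, abs_nonneg c⟩ * Kf : NNReal) * dist x y := by show |c| * (Kf * dist x y) = (|c| * Kf) * dist x y; ring, by simp⟩

instance : SMul ℝ (Lip0 M base) := ⟨rsmul⟩
instance : SMul ℕ (Lip0 M base) := ⟨fun n => rsmul (n : ℝ)⟩
instance : SMul ℤ (Lip0 M base) := ⟨fun n => rsmul (n : ℝ)⟩
instance : Sub (Lip0 M base) := ⟨fun f g => f + -g⟩

@[simp] lemma coe_zero : ⇑(0 : Lip0 M base) = fun _ => 0 := rfl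
@[simp] lemma coe_add (f g : Lip0 M base) : ⇑(f + g) = fun t => f t + g t := rfl
@[simp] lemma coe_neg (f : Lip0 M base) : ⇑(-f) = fun t => -f t := rfl
@[simp] lemma coe_smul (c : ℝ) (f : Lip0 M base) : ⇑(c • f) = fun t => c * f t := rfl
@[simp] lemma coe_sub (f g : Lip0 M base) : ⇑(f - g) = fun t => f t - g t := by
  show (fun t => f t + -(g t)) = _
  funext t; ring

instance : AddCommGroup (Lip0 M base) :=
  (DFunLike.coe_injective (F := Lip0 M base)).addCommGroup _
    rfl (fun _ _ => rfl) (fun _ => rfl) (fun f g => coe_sub f g)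
    (fun f n => by funext t; show (n : ℝ) * f t = n • f t; simp)
    (fun f n => by funext t; show (n : ℝ) * f t = n • f t; simp)

instance : Module ℝ (Lip0 M base) :=
  (DFunLike.coe_injective (F := Lip0 M base)).module ℝ
    { toFun := fun f : Lip0 M base => ⇑f, map_zero' := rfl, map_add' := fun _ _ => rfl }
    (fun _ _ => rfl)

lemma lipSet_neg (f : Lip0 M base) : lipSet (-f) = lipSet f := by
  unfold lipSet
  ext K
  have e : ∀ x y : M, (-f) x - (-f) y = -(f x - f y) := fun x y => by
    show -f x - -f y = -(f x - f y); ring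
  constructor <;> rintro ⟨h0, h⟩ <;> refine ⟨h0, fun x y => ?_⟩
  · have := h x y; rwa [e, abs_neg] at this
  · rw [e, abs_neg]; exact h x y

instance : NormedAddCommGroup (Lip0 M base) :=
  AddGroupNorm.toNormedAddCommGroup
  { toFun := fun f => sInf (lipSet f)
    map_zero' := by
      apply le_antisymm
      · exact csInf_le (lipSet_bddBelow _) ⟨le_refl 0, fun x y => by simp⟩
      · exact (sInf_mem_lipSet (0 : Lip0 M base)).1
    add_le' := fun f g => by
      apply csInf_le (lipSet_bddBelow _)
      refine ⟨add_nonneg (sInf_mem_lipSet f).1 (sInf_mem_lipSet g).1, fun x y => ?_⟩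
      have hf := (sInf_mem_lipSet f).2 x y
      have hg := (sInf_mem_lipSet g).2 x y
      calc |(f + g) x - (f + g) y| = |(f x - f y) + (g x - g y)| := by
            simp [coe_add]; ring_nf
        _ ≤ |f x - f y| + |g x - g y| := abs_add_le _ _
        _ ≤ sInf (lipSet f) * dist x y + sInf (lipSet g) * dist x y := add_le_add hf hg
        _ = (sInf (lipSet f) + sInf (lipSet g)) * dist x y := by ring
    neg' := fun f => by show sInf (lipSet (-f)) = sInf (lipSet f); rw [lipSet_neg]
    eq_zero_of_map_eq_zero' := fun f hf => by
      have hf' : sInf (lipSet f) = 0 := hf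
      apply DFunLike.coe_injective
      funext t
      have h := (sInf_mem_lipSet f).2 t base
      rw [hf', zero_mul] at h
      have h0 : f t - f base = 0 := abs_nonpos_iff.1 h
      show f t = (0 : Lip0 M base) t
      have : (0 : Lip0 M base) t = 0 := rfl
      rw [this]
      simpa using h0 }

lemma norm_def (f : Lip0 M base) : ‖f‖ = sInf (lipSet f) := rfl

instance : NormedSpace ℝ (Lip0 M base) where
  norm_smul_le c f := by
    rw [norm_def, norm_def, Real.norm_eq_abs]
    apply csInf_le (lipSet_bddBelow _)
    refine ⟨mul_nonneg (abs_nonneg c) (sInf_mem_lipSet f).1, fun x y => ?_⟩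
    have hf := (sInf_mem_lipSet f).2 x y
    calc |(c • f) x - (c • f) y| = |c| * |f x - f y| := by
          rw [coe_smul]; rw [← abs_mul]; ring_nf
      _ ≤ |c| * (sInf (lipSet f) * dist x y) :=
          mul_le_mul_of_nonneg_left hf (abs_nonneg c)
      _ = |c| * sInf (lipSet f) * dist x y := by ring

lemma norm_apply_le (f : Lip0 M base) (x y : M) : |f x - f y| ≤ ‖f‖ * dist x y :=
  (sInf_mem_lipSet f).2 x y

end Lip0

open Lip0 NormedSpace

variable (M : Type*) [MetricSpace M]

/-- The Dirac evaluation functional at `x`. -/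
def deltaF (base x : M) : StrongDual ℝ (Lip0 M base) :=
  LinearMap.mkContinuous
    { toFun := fun f => f x
      map_add' := fun _ _ => rfl
      map_smul' := fun _ _ => rfl }
    (dist x base)
    (fun f => by
      have h := Lip0.norm_apply_le f x base
      simp only [Lip0.map_base, sub_zero] at h
      rw [Real.norm_eq_abs, mul_comm]; exact h)

variable {M}

@[simp] lemma deltaF_apply (base x : M) (f : Lip0 M base) : deltaF M base x f = f x := rfl

/-- The molecule `(δ x - δ y)/d(x,y)`. -/
def molecule (base x y : M) : StrongDual ℝ (Lip0 M base) :=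
  (dist x y)⁻¹ • (deltaF M base x - deltaF M base y)

variable (M) in
/-- The Lipschitz-free space over `M`, realized as the closed linear span of the Dirac
evaluations inside the dual of `Lip0 M base`. -/
def FreeSpace (base : M) : Submodule ℝ (StrongDual ℝ (Lip0 M base)) :=
  (Submodule.span ℝ (Set.range (deltaF M base))).topologicalClosure

variable (M) in
/-- The subspace of the free space generated by the Diracs of a subset `S ⊆ M`. -/
def FreeSpaceOn (base : M) (S : Set M) : Submodule ℝ (StrongDual ℝ (Lip0 M base)) :=
  (Submodule.span ℝ (deltaF M base '' S)).topologicalClosure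

lemma deltaF_mem (base x : M) : deltaF M base x ∈ FreeSpace M base :=
  Submodule.le_topologicalClosure _ (Submodule.subset_span ⟨x, rfl⟩)

lemma molecule_mem (base x y : M) : molecule base x y ∈ FreeSpace M base :=
  Submodule.smul_mem _ _ (Submodule.sub_mem _ (deltaF_mem base x) (deltaF_mem base y))

/-- The molecule as an element of the free space. -/
def mol (base x y : M) : ↥(FreeSpace M base) := ⟨molecule base x y, molecule_mem base x y⟩

/-- The "magic function" of Ivakhno, Kadets and Werner associated to the pair `(p, q)`,
with base point `o`. -/
def magicFun (o p q : M) (t : M) : ℝ :=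
  (dist p q / 2) *
    ((dist t q - dist t p) / (dist t q + dist t p) -
      (dist o q - dist o p) / (dist o q + dist o p))

/-! Write `a = d(u,q)`, `b = d(u,p)`, `c = d(v,q)`, `d = d(v,p)`. Then
`f_{pq}(u) - f_{pq}(v) = d(p,q) (ad - bc) / ((a+b)(c+d))`, and the triangle inequality gives
`ad - bc ≤ d(u,v) (c+d)`, so `f_{pq}(u) - f_{pq}(v) ≤ d(p,q) d(u,v) / (a+b)`; with the hypothesis
this yields `(1-ε)(a+b) ≤ d(p,q)`. The claim for `v` follows from `f_{qp} = -f_{pq}`. -/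

section MagicFunction

variable {M : Type*} [MetricSpace M]

def approxSegment (p q : M) (ε : ℝ) : Set M :=
  {x | dist p x + dist x q ≤ dist p q / (1 - ε)}

lemma approxSegment_comm (p q : M) (ε : ℝ) : approxSegment q p ε = approxSegment p q ε := by
  ext x
  simp only [approxSegment, Set.mem_ofPred_eq, dist_comm, add_comm]

lemma magicFun_swap (o p q : M) : magicFun o q p = -magicFun o p q := by
  funext t
  simp only [magicFun, dist_comm q p, Pi.neg_apply]
  ring

lemma dist_mul_dist_sub_dist_mul_dist_le (u v p q : M) :
    dist u q * dist v p - dist u p * dist v q ≤ dist u v * (dist v q + dist v p) := by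
  have huq := mul_le_mul_of_nonneg_right (dist_triangle u v q) (dist_nonneg (x := v) (y := p))
  have hvp := mul_le_mul_of_nonneg_right (dist_triangle_left v p u) (dist_nonneg (x := v) (y := q))
  linarith

lemma magicFun_sub_eq (o p q u v : M) (hu : dist u q + dist u p ≠ 0)
    (hv : dist v q + dist v p ≠ 0) :
    magicFun o p q u - magicFun o p q v =
      dist p q * (dist u q * dist v p - dist u p * dist v q) /
        ((dist u q + dist u p) * (dist v q + dist v p)) := by
  simp only [magicFun]
  field_simp
  ring

lemma magicFun_sub_mul_le (o p q u v : M) :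
    (magicFun o p q u - magicFun o p q v) * (dist p u + dist u q) ≤ dist p q * dist u v := by
  rcases eq_or_ne p q with rfl | hpq
  · simp [magicFun]
  have hD : 0 < dist p q := dist_pos.2 hpq
  have hSu : 0 < dist u q + dist u p := hD.trans_le (by linarith [dist_triangle_left p q u])
  have hSv : 0 < dist v q + dist v p := hD.trans_le (by linarith [dist_triangle_left p q v])
  have hN := dist_mul_dist_sub_dist_mul_dist_le u v p q
  rw [magicFun_sub_eq o p q u v hSu.ne' hSv.ne']
  calc dist p q * (dist u q * dist v p - dist u p * dist v q) /
        ((dist u q + dist u p) * (dist v q + dist v p)) * (dist p u + dist u q)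
      = dist p q * (dist u q * dist v p - dist u p * dist v q) / (dist v q + dist v p) := by
        rw [dist_comm p u]; field_simp; ring
    _ ≤ dist p q * dist u v := by
        rw [div_le_iff₀ hSv, mul_assoc]
        exact mul_le_mul_of_nonneg_left (by linarith) hD.le

lemma mem_approxSegment_of_lt_magicFun_sub_div (o : M) {p q u v : M} {ε : ℝ} (hε : ε < 1)
    (huv : u ≠ v) (h : 1 - ε < (magicFun o p q u - magicFun o p q v) / dist u v) :
    u ∈ approxSegment p q ε := by
  have he : 0 < dist u v := dist_pos.2 huv
  have hS : 0 ≤ dist p u + dist u q := by positivity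
  have key : (1 - ε) * (dist p u + dist u q) * dist u v ≤ dist p q * dist u v :=
    calc (1 - ε) * (dist p u + dist u q) * dist u v
        = (1 - ε) * dist u v * (dist p u + dist u q) := by ring
      _ ≤ (magicFun o p q u - magicFun o p q v) * (dist p u + dist u q) :=
        mul_le_mul_of_nonneg_right ((lt_div_iff₀ he).1 h).le hS
      _ ≤ dist p q * dist u v := magicFun_sub_mul_le o p q u v
  rw [approxSegment, Set.mem_ofPred_eq, le_div_iff₀ (sub_pos.2 hε), mul_comm]
  exact le_of_mul_le_mul_right key he

end MagicFunction

theorem stmt_2_general {M : Type*} [MetricSpace M] (o p q u v : M) (huv : u ≠ v)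
    (ε : ℝ) (hε1 : ε < 1)
    (h : 1 - ε < (magicFun o p q u - magicFun o p q v) / dist u v) :
    u ∈ {x : M | dist p x + dist x q ≤ dist p q / (1 - ε)} ∧
      v ∈ {x : M | dist p x + dist x q ≤ dist p q / (1 - ε)} := by
  refine ⟨mem_approxSegment_of_lt_magicFun_sub_div o hε1 huv h, ?_⟩
  show v ∈ approxSegment p q ε
  rw [← approxSegment_comm]
  refine mem_approxSegment_of_lt_magicFun_sub_div o hε1 huv.symm ?_
  rwa [magicFun_swap, Pi.neg_apply, Pi.neg_apply, neg_sub_neg, dist_comm]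

/-- Lemma 3(2): if `(f_{pq}(u) - f_{pq}(v))/d(u,v) > 1 - ε` then both `u` and `v` belong
to the approximate segment `[p,q]_ε`. -/
theorem stmt_2 {M : Type*} [MetricSpace M] (o p q u v : M) (hpq : p ≠ q) (huv : u ≠ v)
    (ε : ℝ) (hε : 0 < ε) (hε1 : ε < 1)
    (h : 1 - ε < (magicFun o p q u - magicFun o p q v) / dist u v) :
    u ∈ {x : M | dist p x + dist x q ≤ dist p q / (1 - ε)} ∧
      v ∈ {x : M | dist p x + dist x q ≤ dist p q / (1 - ε)} :=
  stmt_2_general o p q u v huv ε hε1 h
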